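/- arXiv:1003.1469 — 2 statements merged into one kernel-verified Lean document; each statement's English description precedes it below -/
import Mathlib

section
/- Let n ≥ 3 and let Γ be a torsion-free affine connection on U with projective Weyl tensor W^a_{bcd}. A necessary condition for the projective class of Γ to contain the Levi-Civita connection of some metric ĝ_{ab} is the existence of a smooth symmetric tensor field g^{ab} on U, nondegenerate at every point with pointwise inverse g_{ab}, such that Σ_{e,b,c} g_{ae} g^{bc} W^e_{bcd} = Σ_{e,b,c} g_{de} g^{bc} W^e_{bca} for all a, d at every point of U. Moreover, if such a Levi-Civita connection exists in the projective class, then ĝ_{ab} = e^{2φ} g_{ab} for a solution g^{ab} of this equation and some smooth function φ on U. -/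
open scoped BigOperators

noncomputable section

/-- Partial derivative of `f` in the `b`-th coordinate direction at `x`. -/
def pd {n : ℕ} (b : Fin n) (f : (Fin n → ℝ) → ℝ) (x : Fin n → ℝ) : ℝ :=
  fderiv ℝ f x (Pi.single b 1)

/-- Kronecker delta. -/
def kd {n : ℕ} (a b : Fin n) : ℝ := if a = b then 1 else 0

/-- A torsion-free affine connection on `U`, given by smooth coefficients `Γ^a_{bc}`,
symmetric in the lower indices. -/
def IsConn {n : ℕ} (U : Set (Fin n → ℝ))
    (Γ : Fin n → Fin n → Fin n → (Fin n → ℝ) → ℝ) : Prop :=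
  (∀ a b c, ContDiffOn ℝ (⊤ : ℕ∞) (Γ a b c) U) ∧
  (∀ a b c, ∀ x ∈ U, Γ a b c x = Γ a c b x)

/-- Curvature tensor `R^a_{bcd}` of the connection `Γ`. -/
def curv {n : ℕ} (Γ : Fin n → Fin n → Fin n → (Fin n → ℝ) → ℝ)
    (a b c d : Fin n) (x : Fin n → ℝ) : ℝ :=
  pd c (Γ a b d) x - pd d (Γ a b c) x
    + ∑ e, (Γ a e c x * Γ e b d x - Γ a e d x * Γ e b c x)

/-- Ricci tensor `R_{bd} = Σ_a R^a_{bad}`. -/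
def ricci {n : ℕ} (Γ : Fin n → Fin n → Fin n → (Fin n → ℝ) → ℝ)
    (b d : Fin n) (x : Fin n → ℝ) : ℝ :=
  ∑ a, curv Γ a b a d x

/-- Projective Schouten tensor `P_{ab} = (1/(n-1)) R_{(ab)} - (1/(n+1)) R_{[ab]}`. -/
def schouten {n : ℕ} (Γ : Fin n → Fin n → Fin n → (Fin n → ℝ) → ℝ)
    (a b : Fin n) (x : Fin n → ℝ) : ℝ :=
  (1/((n : ℝ) - 1)) * ((ricci Γ a b x + ricci Γ b a x)/2)
    - (1/((n : ℝ) + 1)) * ((ricci Γ a b x - ricci Γ b a x)/2)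

/-- Projective Weyl tensor
`W^a_{bcd} = R^a_{bcd} - δ^a_c P_{db} + δ^a_d P_{cb} + 2 δ^a_b P_{[cd]}`. -/
def weyl {n : ℕ} (Γ : Fin n → Fin n → Fin n → (Fin n → ℝ) → ℝ)
    (a b c d : Fin n) (x : Fin n → ℝ) : ℝ :=
  curv Γ a b c d x - kd a c * schouten Γ d b x + kd a d * schouten Γ c b x
    + 2 * kd a b * ((schouten Γ c d x - schouten Γ d c x)/2)

/-- Covariant derivative `∇_a P_{bc}` of the projective Schouten tensor. -/
def covSchouten {n : ℕ} (Γ : Fin n → Fin n → Fin n → (Fin n → ℝ) → ℝ)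
    (a b c : Fin n) (x : Fin n → ℝ) : ℝ :=
  pd a (schouten Γ b c) x - (∑ e, Γ e b a x * schouten Γ e c x)
    - (∑ e, Γ e c a x * schouten Γ b e x)

/-- Projective Cotton tensor `Y_{bca} = ∇_b P_{ca} - ∇_c P_{ba}`. -/
def cotton {n : ℕ} (Γ : Fin n → Fin n → Fin n → (Fin n → ℝ) → ℝ)
    (b c a : Fin n) (x : Fin n → ℝ) : ℝ :=
  covSchouten Γ b c a x - covSchouten Γ c b a x

/-- Covariant derivative `∇_e W^a_{bcd}` of the projective Weyl tensor. -/
def covWeyl {n : ℕ} (Γ : Fin n → Fin n → Fin n → (Fin n → ℝ) → ℝ)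
    (e a b c d : Fin n) (x : Fin n → ℝ) : ℝ :=
  pd e (weyl Γ a b c d) x + (∑ f, Γ a f e x * weyl Γ f b c d x)
    - (∑ f, Γ f b e x * weyl Γ a f c d x)
    - (∑ f, Γ f c e x * weyl Γ a b f d x)
    - (∑ f, Γ f d e x * weyl Γ a b c f x)

/-- Covariant derivative `∇_a Y_{bcd}` of the projective Cotton tensor. -/
def covCotton {n : ℕ} (Γ : Fin n → Fin n → Fin n → (Fin n → ℝ) → ℝ)
    (a b c d : Fin n) (x : Fin n → ℝ) : ℝ :=
  pd a (cotton Γ b c d) x - (∑ e, Γ e b a x * cotton Γ e c d x)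
    - (∑ e, Γ e c a x * cotton Γ b e d x)
    - (∑ e, Γ e d a x * cotton Γ b c e x)

/-- Covariant derivative `∇_a A_b` of a 1-form `A`. -/
def cov1 {n : ℕ} (Γ : Fin n → Fin n → Fin n → (Fin n → ℝ) → ℝ)
    (a b : Fin n) (A : Fin n → (Fin n → ℝ) → ℝ) (x : Fin n → ℝ) : ℝ :=
  pd a (A b) x - ∑ e, Γ e b a x * A e x

/-- Covariant derivative `∇_c g^{ab}` of a (2,0)-tensor `g`. -/
def covUp2 {n : ℕ} (Γ : Fin n → Fin n → Fin n → (Fin n → ℝ) → ℝ)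
    (c a b : Fin n) (g : Fin n → Fin n → (Fin n → ℝ) → ℝ) (x : Fin n → ℝ) : ℝ :=
  pd c (g a b) x + (∑ e, Γ a e c x * g e b x) + (∑ e, Γ b e c x * g a e x)

/-- Covariant derivative `∇_a μ^b` of a vector field `μ`. -/
def covVec {n : ℕ} (Γ : Fin n → Fin n → Fin n → (Fin n → ℝ) → ℝ)
    (a b : Fin n) (μ : Fin n → (Fin n → ℝ) → ℝ) (x : Fin n → ℝ) : ℝ :=
  pd a (μ b) x + ∑ e, Γ b e a x * μ e x

/-- A smooth pseudo-Riemannian metric on `U`: smooth, symmetric, and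
nondegenerate at every point of `U`. -/
def IsMetric {n : ℕ} (U : Set (Fin n → ℝ))
    (g : Fin n → Fin n → (Fin n → ℝ) → ℝ) : Prop :=
  (∀ a b, ContDiffOn ℝ (⊤ : ℕ∞) (g a b) U) ∧
  (∀ a b, ∀ x ∈ U, g a b x = g b a x) ∧
  (∀ x ∈ U, (Matrix.of fun a b => g a b x).det ≠ 0)

/-- Pointwise inverse `g^{ab}` of a metric (or pointwise matrix inverse of any
2-index field). -/
def minv {n : ℕ} (g : Fin n → Fin n → (Fin n → ℝ) → ℝ)
    (a b : Fin n) (x : Fin n → ℝ) : ℝ :=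
  (Matrix.of fun i j => g i j x)⁻¹ a b

/-- Levi-Civita connection coefficients
`Γ^a_{bc} = ½ Σ_d g^{ad}(∂_b g_{dc} + ∂_c g_{bd} - ∂_d g_{bc})` of a metric `g`. -/
def levicivita {n : ℕ} (g : Fin n → Fin n → (Fin n → ℝ) → ℝ)
    (a b c : Fin n) (x : Fin n → ℝ) : ℝ :=
  (1/2) * ∑ d, minv g a d x * (pd b (g d c) x + pd c (g b d) x - pd d (g b c) x)

/-- Ricci scalar `R = Σ_{a,b} g^{ab} R_{ab}` of a metric `g`. -/
def ricciScalar {n : ℕ} (g : Fin n → Fin n → (Fin n → ℝ) → ℝ)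
    (x : Fin n → ℝ) : ℝ :=
  ∑ a, ∑ b, minv g a b x * ricci (levicivita g) a b x

/-- Metric Schouten tensor `LCP_{ab} = (1/(n-2))(R_{ab} - R g_{ab}/(2(n-1)))`. -/
def lcSchouten {n : ℕ} (g : Fin n → Fin n → (Fin n → ℝ) → ℝ)
    (a b : Fin n) (x : Fin n → ℝ) : ℝ :=
  (1/((n : ℝ) - 2)) *
    (ricci (levicivita g) a b x - ricciScalar g x * g a b x / (2*((n : ℝ) - 1)))

/-- Metric (conformal) Weyl tensor of a metric `g`. -/
def lcWeyl {n : ℕ} (g : Fin n → Fin n → (Fin n → ℝ) → ℝ)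
    (a b c d : Fin n) (x : Fin n → ℝ) : ℝ :=
  curv (levicivita g) a b c d x - kd a c * lcSchouten g d b x
    + kd a d * lcSchouten g c b x
    - (∑ e, g b d x * minv g a e x * lcSchouten g e c x)
    + (∑ e, g b c x * minv g a e x * lcSchouten g e d x)

/-- `Γ'` is projectively equivalent to `Γ` on `U`:
`Γ'^a_{bc} = Γ^a_{bc} + δ^a_c A_b + δ^a_b A_c` for some smooth 1-form `A`. -/
def ProjEquiv {n : ℕ} (U : Set (Fin n → ℝ))
    (Γ' Γ : Fin n → Fin n → Fin n → (Fin n → ℝ) → ℝ) : Prop :=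
  ∃ A : Fin n → (Fin n → ℝ) → ℝ, (∀ a, ContDiffOn ℝ (⊤ : ℕ∞) (A a) U) ∧
    ∀ a b c, ∀ x ∈ U, Γ' a b c x = Γ a b c x + kd a c * A b x + kd a b * A c x

/-- A connection is special on `U` if its projective Schouten tensor is symmetric. -/
def IsSpecial {n : ℕ} (U : Set (Fin n → ℝ))
    (Γ : Fin n → Fin n → Fin n → (Fin n → ℝ) → ℝ) : Prop :=
  ∀ a b, ∀ x ∈ U, schouten Γ a b x = schouten Γ b a x

/-- A smooth symmetric (2,0)-tensor field on `U`. -/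
def SmoothSym2 {n : ℕ} (U : Set (Fin n → ℝ))
    (g : Fin n → Fin n → (Fin n → ℝ) → ℝ) : Prop :=
  (∀ a b, ContDiffOn ℝ (⊤ : ℕ∞) (g a b) U) ∧ (∀ a b, ∀ x ∈ U, g a b x = g b a x)

/-- The prolonged metrisability system (3.10) for `(g^{ab}, μ^a, ρ)`:
`∇_c g^{ab} = μ^a δ^b_c + μ^b δ^a_c`,
`∇_a μ^b = ρ δ^b_a - Σ_c P_{ac} g^{bc} - (1/n) Σ_{c,d} W^b_{cda} g^{cd}`,
`∇_a ρ = -2 Σ_b P_{ab} μ^b + (2/n) Σ_{b,c} Y_{abc} g^{bc}`. -/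
def ProlongedSys {n : ℕ} (U : Set (Fin n → ℝ))
    (Γ : Fin n → Fin n → Fin n → (Fin n → ℝ) → ℝ)
    (g : Fin n → Fin n → (Fin n → ℝ) → ℝ)
    (μ : Fin n → (Fin n → ℝ) → ℝ) (ρ : (Fin n → ℝ) → ℝ) : Prop :=
  (∀ a b c, ∀ x ∈ U, covUp2 Γ c a b g x = μ a x * kd b c + μ b x * kd a c) ∧
  (∀ a b, ∀ x ∈ U, covVec Γ a b μ x =
      ρ x * kd b a - (∑ c, schouten Γ a c x * g b c x)
        - (1/(n : ℝ)) * ∑ c, ∑ d, weyl Γ b c d a x * g c d x) ∧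
  (∀ a, ∀ x ∈ U, pd a ρ x =
      -2 * (∑ b, schouten Γ a b x * μ b x)
        + (2/(n : ℝ)) * ∑ b, ∑ c, cotton Γ a b c x * g b c x)

/-- The tensor `T_{[ed]}^{cb}{}_{af}` of Proposition 3.6 (eq. (3.12)). -/
def Ttensor {n : ℕ} (Γ : Fin n → Fin n → Fin n → (Fin n → ℝ) → ℝ)
    (e d c b a f : Fin n) (x : Fin n → ℝ) : ℝ :=
  (1/2) * ((kd c a * weyl Γ b f e d x + kd c f * weyl Γ b a e d x)/2)
  + (1/2) * ((kd b a * weyl Γ c f e d x + kd b f * weyl Γ c a e d x)/2)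
  + (1/(n : ℝ)) * ((((weyl Γ c a f e x + weyl Γ c f a e x)/2) * kd b d
      - ((weyl Γ c a f d x + weyl Γ c f a d x)/2) * kd b e)/2)
  + (1/(n : ℝ)) * ((((weyl Γ b a f e x + weyl Γ b f a e x)/2) * kd c d
      - ((weyl Γ b a f d x + weyl Γ b f a d x)/2) * kd c e)/2)

/-- The tensor `S_{[ae]}^b{}_{cd}` of Proposition 3.8. -/
def Stensor {n : ℕ} (Γ : Fin n → Fin n → Fin n → (Fin n → ℝ) → ℝ)
    (a e b c d : Fin n) (x : Fin n → ℝ) : ℝ :=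
  (((n : ℝ) - 2)/2) * ((cotton Γ e a c x * kd b d + cotton Γ e a d x * kd b c)/2)
  + (covWeyl Γ c b d e a x + covWeyl Γ d b c e a x)/2
  + (((covWeyl Γ a b c d e x + covWeyl Γ a b d c e x)/2)
      - ((covWeyl Γ e b c d a x + covWeyl Γ e b d c a x)/2))/2

/-- The tensor `U_{[ab]cd}` of Proposition 3.9. -/
def Utensor {n : ℕ} (Γ : Fin n → Fin n → Fin n → (Fin n → ℝ) → ℝ)
    (a b c d : Fin n) (x : Fin n → ℝ) : ℝ :=
  (((covCotton Γ a b c d x + covCotton Γ a b d c x)/2)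
      - ((covCotton Γ b a c d x + covCotton Γ b a d c x)/2))/2
  + ∑ e, (((weyl Γ e c d a x + weyl Γ e d c a x)/2) * schouten Γ b e x
      - ((weyl Γ e c d b x + weyl Γ e d c b x)/2) * schouten Γ a e x)/2

end
noncomputable section
section KdTools
variable {n : ℕ}

@[simp] lemma sum_kd_mul (a : Fin n) (f : Fin n → ℝ) : ∑ e, kd a e * f e = f a := by
  simp [kd, ite_mul]

@[simp] lemma sum_kd_mul' (a : Fin n) (f : Fin n → ℝ) : ∑ e, kd e a * f e = f a := by
  simp [kd, ite_mul]

@[simp] lemma sum_mul_kd (a : Fin n) (f : Fin n → ℝ) : ∑ e, f e * kd a e = f a := by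
  simp [kd, mul_ite]

@[simp] lemma sum_mul_kd' (a : Fin n) (f : Fin n → ℝ) : ∑ e, f e * kd e a = f a := by
  simp [kd, mul_ite]

@[simp] lemma kd_self (a : Fin n) : kd a a = 1 := by simp [kd]

@[simp] lemma sum_kd_left {n : ℕ} (a : Fin n) : ∑ e, kd e a = 1 := by simp [kd]
@[simp] lemma sum_kd_right {n : ℕ} (a : Fin n) : ∑ e, kd a e = 1 := by simp [kd]

end KdTools
section Toolbox
variable {n : ℕ} {U : Set (Fin n → ℝ)} {x : Fin n → ℝ} {f g : (Fin n → ℝ) → ℝ}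

lemma diffAt {F : Type*} [NormedAddCommGroup F] [NormedSpace ℝ F]
    {f : (Fin n → ℝ) → F} (hUo : IsOpen U) (hf : ContDiffOn ℝ (⊤ : ℕ∞) f U) (hx : x ∈ U) :
    DifferentiableAt ℝ f x :=
  (hf.contDiffAt (hUo.mem_nhds hx)).differentiableAt (by simp)

lemma pd_congr_on (hUo : IsOpen U) (h : ∀ y ∈ U, f y = g y) (hx : x ∈ U) (b : Fin n) :
    pd b f x = pd b g x := by
  unfold pd
  rw [Filter.EventuallyEq.fderiv_eq (Filter.eventuallyEq_of_mem (hUo.mem_nhds hx) h)]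

lemma pd_add (hf : DifferentiableAt ℝ f x) (hg : DifferentiableAt ℝ g x) (b : Fin n) :
    pd b (fun y => f y + g y) x = pd b f x + pd b g x := by
  unfold pd; rw [fderiv_fun_add hf hg]; rfl

lemma pd_mul (hf : DifferentiableAt ℝ f x) (hg : DifferentiableAt ℝ g x) (b : Fin n) :
    pd b (fun y => f y * g y) x = f x * pd b g x + g x * pd b f x := by
  unfold pd; rw [fderiv_fun_mul hf hg]; rfl

lemma pd_const_mul (hf : DifferentiableAt ℝ f x) (c : ℝ) (b : Fin n) :
    pd b (fun y => c * f y) x = c * pd b f x := by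
  unfold pd; rw [fderiv_const_mul hf]; rfl

lemma pd_sum {ι : Type*} (s : Finset ι) (F : ι → (Fin n → ℝ) → ℝ)
    (h : ∀ i ∈ s, DifferentiableAt ℝ (F i) x) (b : Fin n) :
    pd b (fun y => ∑ i ∈ s, F i y) x = ∑ i ∈ s, pd b (F i) x := by
  unfold pd; rw [fderiv_fun_sum h]; simp

lemma contDiffOn_pd (hUo : IsOpen U) (hf : ContDiffOn ℝ (⊤ : ℕ∞) f U) (b : Fin n) :
    ContDiffOn ℝ (⊤ : ℕ∞) (pd b f) U :=
  (hf.fderiv_of_isOpen hUo (by simp)).clm_apply contDiffOn_const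

lemma pd_comm (hUo : IsOpen U) (hf : ContDiffOn ℝ (⊤ : ℕ∞) f U) (hx : x ∈ U) (c d : Fin n) :
    pd c (pd d f) x = pd d (pd c f) x := by
  have hsymm := (hf.contDiffAt (hUo.mem_nhds hx)).isSymmSndFDerivAt (by rw [minSmoothness_of_isRCLikeNormedField]; exact WithTop.coe_le_coe.mpr le_top)
  have hD : DifferentiableAt ℝ (fderiv ℝ f) x :=
    diffAt hUo (hf.fderiv_of_isOpen hUo (by simp)) hx
  have key : ∀ v w : Fin n → ℝ,
      fderiv ℝ (fun y => fderiv ℝ f y v) x w = fderiv ℝ (fderiv ℝ f) x w v := by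
    intro v w
    have h1 : HasFDerivAt (fun y => fderiv ℝ f y v)
        ((ContinuousLinearMap.apply ℝ ℝ v).comp (fderiv ℝ (fderiv ℝ f) x)) x :=
      (ContinuousLinearMap.apply ℝ ℝ v).hasFDerivAt.comp x hD.hasFDerivAt
    rw [h1.fderiv]; rfl
  unfold pd
  rw [key, key, hsymm]
end Toolbox
section MatrixTools
variable {n : ℕ} {U : Set (Fin n → ℝ)} {x : Fin n → ℝ}
variable {g : Fin n → Fin n → (Fin n → ℝ) → ℝ}

lemma contDiffOn_finset_prod {ι : Type*} (s : Finset ι) (F : ι → (Fin n → ℝ) → ℝ)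
    (h : ∀ i ∈ s, ContDiffOn ℝ (⊤ : ℕ∞) (F i) U) :
    ContDiffOn ℝ (⊤ : ℕ∞) (fun x => ∏ i ∈ s, F i x) U := by
  classical
  induction s using Finset.induction with
  | empty => simpa using contDiffOn_const
  | insert _ _ hni ih =>
    rename_i a s
    simp only [Finset.prod_insert hni]
    exact (h a (Finset.mem_insert_self a s)).mul
      (ih fun i hi => h i (Finset.mem_insert_of_mem hi))

lemma contDiffOn_det (hg : ∀ a b, ContDiffOn ℝ (⊤ : ℕ∞) (g a b) U) :
    ContDiffOn ℝ (⊤ : ℕ∞) (fun x => (Matrix.of fun a b => g a b x).det) U := by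
  have : ∀ x, (Matrix.of fun a b => g a b x).det
      = ∑ σ : Equiv.Perm (Fin n), ((Equiv.Perm.sign σ : ℤ) : ℝ) * ∏ i, g (σ i) i x := by
    intro x; rw [Matrix.det_apply]
    simp [Matrix.of_apply, Units.smul_def, zsmul_eq_mul]
  simp only [this]
  exact ContDiffOn.sum fun σ _ =>
    contDiffOn_const.mul (contDiffOn_finset_prod _ _ fun i _ => hg (σ i) i)

lemma contDiffOn_minv (hUo : IsOpen U) (hg : ∀ a b, ContDiffOn ℝ (⊤ : ℕ∞) (g a b) U)
    (hdet : ∀ x ∈ U, (Matrix.of fun a b => g a b x).det ≠ 0) (a b : Fin n) :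
    ContDiffOn ℝ (⊤ : ℕ∞) (minv g a b) U := by
  classical
  have hadj : ContDiffOn ℝ (⊤ : ℕ∞)
      (fun x => (Matrix.of fun i j => g i j x).adjugate a b) U := by
    have : ∀ x, (Matrix.of fun i j => g i j x).adjugate a b
        = (Matrix.of fun i j =>
            (fun i j x => if i = b then (Pi.single a 1 : Fin n → ℝ) j else g i j x) i j x).det := by
      intro x
      rw [Matrix.adjugate_apply]
      congr 1
      ext i j
      simp [Matrix.updateRow_apply, Matrix.of_apply]
    simp only [this]
    apply contDiffOn_det
    intro i j
    by_cases hib : i = b <;> simp [hib, hg i j, contDiffOn_const]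
  have heq : ∀ y ∈ U, minv g a b y
      = ((Matrix.of fun i j => g i j y).det)⁻¹ * (Matrix.of fun i j => g i j y).adjugate a b := by
    intro y hy
    unfold minv
    rw [Matrix.inv_def]
    simp [Ring.inverse_eq_inv']
  exact (((contDiffOn_det hg).inv hdet).mul hadj).congr fun y hy => (heq y hy)

lemma minv_mul (hdet : (Matrix.of fun a b => g a b x).det ≠ 0) (a b : Fin n) :
    (∑ e, minv g a e x * g e b x) = kd a b := by
  have h := Matrix.nonsing_inv_mul (Matrix.of fun a b => g a b x)
    (isUnit_iff_ne_zero.mpr hdet)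
  have := congrArg (fun M => M a b) h
  simpa [Matrix.mul_apply, minv, Matrix.one_apply, kd] using this

lemma mul_minv (hdet : (Matrix.of fun a b => g a b x).det ≠ 0) (a b : Fin n) :
    (∑ e, g a e x * minv g e b x) = kd a b := by
  have h := Matrix.mul_nonsing_inv (Matrix.of fun a b => g a b x)
    (isUnit_iff_ne_zero.mpr hdet)
  have := congrArg (fun M => M a b) h
  simpa [Matrix.mul_apply, minv, Matrix.one_apply, kd] using this

lemma minv_symm (hsym : ∀ a b, g a b x = g b a x) (a b : Fin n) :
    minv g a b x = minv g b a x := by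
  have hT : Matrix.transpose (Matrix.of fun i j => g i j x) = (Matrix.of fun i j => g i j x) := by
    ext i j; simp [Matrix.transpose_apply, hsym i j]
  calc minv g a b x = (Matrix.of fun i j => g i j x)⁻¹ a b := rfl
    _ = (Matrix.transpose (Matrix.of fun i j => g i j x))⁻¹ a b := by rw [hT]
    _ = (Matrix.transpose (Matrix.of fun i j => g i j x)⁻¹) a b := by
        rw [Matrix.transpose_nonsing_inv]
    _ = minv g b a x := rfl

lemma minv_minv (hdet : (Matrix.of fun a b => g a b x).det ≠ 0) (a b : Fin n) :
    minv (minv g) a b x = g a b x := by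
  have h1 : (Matrix.of fun i j => minv g i j x)
      = (Matrix.of fun i j => g i j x)⁻¹ := rfl
  calc minv (minv g) a b x = (Matrix.of fun i j => minv g i j x)⁻¹ a b := rfl
    _ = (Matrix.of fun i j => g i j x)⁻¹⁻¹ a b := by rw [h1]
    _ = g a b x := by
        rw [Matrix.nonsing_inv_nonsing_inv _ (isUnit_iff_ne_zero.mpr hdet)]; rfl

lemma det_minv_ne (hdet : (Matrix.of fun a b => g a b x).det ≠ 0) :
    (Matrix.of fun a b => minv g a b x).det ≠ 0 := by
  have h1 : (Matrix.of fun a b => minv g a b x) = (Matrix.of fun a b => g a b x)⁻¹ := rfl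
  rw [h1, Matrix.det_nonsing_inv]
  simpa [Ring.inverse_eq_inv'] using inv_ne_zero hdet

end MatrixTools
/-- Lowered Christoffel symbols `Γ_{dbc} = ½(∂_b g_{dc} + ∂_c g_{bd} − ∂_d g_{bc})`. -/
def Glow {n : ℕ} (g : Fin n → Fin n → (Fin n → ℝ) → ℝ) (d b c : Fin n)
    (x : Fin n → ℝ) : ℝ :=
  (1/2) * (pd b (g d c) x + pd c (g b d) x - pd d (g b c) x)

section LeviCivita
variable {n : ℕ} {U : Set (Fin n → ℝ)} {x : Fin n → ℝ}
variable {g : Fin n → Fin n → (Fin n → ℝ) → ℝ}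

lemma contDiffOn_Glow (hUo : IsOpen U) (hg : ∀ a b, ContDiffOn ℝ (⊤ : ℕ∞) (g a b) U)
    (d b c : Fin n) : ContDiffOn ℝ (⊤ : ℕ∞) (Glow g d b c) U := by
  unfold Glow
  exact contDiffOn_const.mul (((contDiffOn_pd hUo (hg d c) b).add
    (contDiffOn_pd hUo (hg b d) c)).sub (contDiffOn_pd hUo (hg b c) d))

lemma lc_eq_sum (a b c : Fin n) :
    levicivita g a b c x = ∑ d, minv g a d x * Glow g d b c x := by
  unfold levicivita Glow
  rw [Finset.mul_sum]
  exact Finset.sum_congr rfl fun d _ => by ring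

lemma contDiffOn_lc (hUo : IsOpen U) (hg : ∀ a b, ContDiffOn ℝ (⊤ : ℕ∞) (g a b) U)
    (hdet : ∀ x ∈ U, (Matrix.of fun a b => g a b x).det ≠ 0) (a b c : Fin n) :
    ContDiffOn ℝ (⊤ : ℕ∞) (levicivita g a b c) U := by
  have h : levicivita g a b c = fun x => ∑ d, minv g a d x * Glow g d b c x :=
    funext fun x => lc_eq_sum a b c
  rw [h]
  exact ContDiffOn.sum fun d _ =>
    (contDiffOn_minv hUo hg hdet a d).mul (contDiffOn_Glow hUo hg d b c)

lemma g_mul_lc (hdet : (Matrix.of fun a b => g a b x).det ≠ 0) (a b c : Fin n) :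
    ∑ e, g a e x * levicivita g e b c x = Glow g a b c x := by
  calc ∑ e, g a e x * levicivita g e b c x
      = ∑ e, ∑ d, g a e x * minv g e d x * Glow g d b c x := by
        refine Finset.sum_congr rfl fun e _ => ?_
        rw [lc_eq_sum, Finset.mul_sum]
        exact Finset.sum_congr rfl fun d _ => by ring
    _ = ∑ d, (∑ e, g a e x * minv g e d x) * Glow g d b c x := by
        rw [Finset.sum_comm]
        exact Finset.sum_congr rfl fun d _ => by rw [Finset.sum_mul]
    _ = ∑ d, kd a d * Glow g d b c x := by
        refine Finset.sum_congr rfl fun d _ => ?_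
        rw [mul_minv hdet]
    _ = Glow g a b c x := by simp

lemma pd_g_eq (hUo : IsOpen U) (hsym : ∀ a b, ∀ y ∈ U, g a b y = g b a y) (hx : x ∈ U)
    (a b c : Fin n) : pd c (g a b) x = Glow g a b c x + Glow g b a c x := by
  unfold Glow
  rw [pd_congr_on hUo (hsym b a) hx c]
  ring

lemma Glow_symm (hUo : IsOpen U) (hsym : ∀ a b, ∀ y ∈ U, g a b y = g b a y) (hx : x ∈ U)
    (d b c : Fin n) : Glow g d b c x = Glow g d c b x := by
  unfold Glow
  rw [pd_congr_on hUo (hsym d c) hx b, pd_congr_on hUo (hsym b d) hx c,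
    pd_congr_on hUo (hsym b c) hx d]
  ring

lemma lc_symm_pt (hUo : IsOpen U) (hsym : ∀ a b, ∀ y ∈ U, g a b y = g b a y) (hx : x ∈ U)
    (a b c : Fin n) : levicivita g a b c x = levicivita g a c b x := by
  rw [lc_eq_sum, lc_eq_sum]
  exact Finset.sum_congr rfl fun d _ => by rw [Glow_symm hUo hsym hx]

lemma quad_symm (hsym : ∀ a b, g a b x = g b a x) (a b c d : Fin n) :
    ∑ e, Glow g e a c x * levicivita g e b d x
      = ∑ e, Glow g e b d x * levicivita g e a c x := by
  have hm : ∀ i j, minv g i j x = minv g j i x := fun i j => minv_symm hsym i j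
  calc ∑ e, Glow g e a c x * levicivita g e b d x
      = ∑ e, ∑ f, Glow g e a c x * minv g e f x * Glow g f b d x := by
        refine Finset.sum_congr rfl fun e _ => ?_
        rw [lc_eq_sum, Finset.mul_sum]
        exact Finset.sum_congr rfl fun f _ => by ring
    _ = ∑ f, ∑ e, Glow g f b d x * minv g f e x * Glow g e a c x := by
        rw [Finset.sum_comm]
        exact Finset.sum_congr rfl fun f _ => Finset.sum_congr rfl fun e _ => by
          rw [hm e f]; ring
    _ = ∑ e, Glow g e b d x * levicivita g e a c x := by
        refine Finset.sum_congr rfl fun f _ => ?_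
        rw [lc_eq_sum, Finset.mul_sum]
        exact Finset.sum_congr rfl fun e _ => by ring
end LeviCivita
section Curvature
variable {n : ℕ} {U : Set (Fin n → ℝ)} {x : Fin n → ℝ}
variable {g : Fin n → Fin n → (Fin n → ℝ) → ℝ}

lemma Rlow_formula (hUo : IsOpen U) (hg : ∀ a b, ContDiffOn ℝ (⊤ : ℕ∞) (g a b) U)
    (hsym : ∀ a b, ∀ y ∈ U, g a b y = g b a y)
    (hdet : ∀ y ∈ U, (Matrix.of fun a b => g a b y).det ≠ 0)
    (hx : x ∈ U) (a b c d : Fin n) :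
    ∑ e, g a e x * curv (levicivita g) e b c d x
      = pd c (Glow g a b d) x - pd d (Glow g a b c) x
        - ∑ e, Glow g e a c x * levicivita g e b d x
        + ∑ e, Glow g e a d x * levicivita g e b c x := by
  have hdg : ∀ i j, DifferentiableAt ℝ (g i j) x := fun i j => diffAt hUo (hg i j) hx
  have hdlc : ∀ i j k, DifferentiableAt ℝ (levicivita g i j k) x := fun i j k =>
    diffAt hUo (contDiffOn_lc hUo hg hdet i j k) hx
  have key : ∀ u v w : Fin n,
      ∑ e, g a e x * pd u (levicivita g e v w) x
        = pd u (Glow g a v w) x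
          - ∑ e, Glow g a e u x * levicivita g e v w x
          - ∑ e, Glow g e a u x * levicivita g e v w x := by
    intro u v w
    calc ∑ e, g a e x * pd u (levicivita g e v w) x
        = (∑ e, pd u (fun y => g a e y * levicivita g e v w y) x)
          - ∑ e, levicivita g e v w x * pd u (g a e) x := by
          rw [← Finset.sum_sub_distrib]
          refine Finset.sum_congr rfl fun e _ => ?_
          rw [pd_mul (hdg a e) (hdlc e v w)]
          ring
      _ = pd u (fun y => ∑ e, g a e y * levicivita g e v w y) x
          - ∑ e, levicivita g e v w x * pd u (g a e) x := by
          rw [pd_sum Finset.univ (fun e y => g a e y * levicivita g e v w y) (fun e _ => (hdg a e).mul (hdlc e v w)) u]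
      _ = pd u (Glow g a v w) x
          - ∑ e, (Glow g a e u x * levicivita g e v w x
              + Glow g e a u x * levicivita g e v w x) := by
          rw [pd_congr_on hUo (fun y hy => g_mul_lc (hdet y hy) a v w) hx u]
          congr 1
          refine Finset.sum_congr rfl fun e _ => ?_
          rw [pd_g_eq hUo hsym hx a e u]
          ring
      _ = pd u (Glow g a v w) x
          - ∑ e, Glow g a e u x * levicivita g e v w x
          - ∑ e, Glow g e a u x * levicivita g e v w x := by
          rw [Finset.sum_add_distrib]; ring
  have quad : ∀ u v w : Fin n,
      ∑ e, g a e x * (∑ f, levicivita g e f u x * levicivita g f v w x)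
        = ∑ e, Glow g a e u x * levicivita g e v w x := by
    intro u v w
    calc ∑ e, g a e x * (∑ f, levicivita g e f u x * levicivita g f v w x)
        = ∑ e, ∑ f, g a e x * levicivita g e f u x * levicivita g f v w x := by
          refine Finset.sum_congr rfl fun e _ => ?_
          rw [Finset.mul_sum]
          exact Finset.sum_congr rfl fun f _ => by ring
      _ = ∑ f, (∑ e, g a e x * levicivita g e f u x) * levicivita g f v w x := by
          rw [Finset.sum_comm]
          exact Finset.sum_congr rfl fun f _ => by rw [Finset.sum_mul]
      _ = ∑ e, Glow g a e u x * levicivita g e v w x :=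
          Finset.sum_congr rfl fun f _ => by rw [g_mul_lc (hdet x hx)]
  calc ∑ e, g a e x * curv (levicivita g) e b c d x
      = (∑ e, g a e x * pd c (levicivita g e b d) x)
        - (∑ e, g a e x * pd d (levicivita g e b c) x)
        + (∑ e, g a e x * (∑ f, levicivita g e f c x * levicivita g f b d x))
        - (∑ e, g a e x * (∑ f, levicivita g e f d x * levicivita g f b c x)) := by
        rw [← Finset.sum_sub_distrib, ← Finset.sum_add_distrib, ← Finset.sum_sub_distrib]
        refine Finset.sum_congr rfl fun e _ => ?_
        unfold curv
        rw [Finset.sum_sub_distrib]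
        ring
    _ = pd c (Glow g a b d) x - pd d (Glow g a b c) x
        - ∑ e, Glow g e a c x * levicivita g e b d x
        + ∑ e, Glow g e a d x * levicivita g e b c x := by
        rw [key c b d, key d b c, quad c b d, quad d b c]
        ring
end Curvature
section CurvSymm
variable {n : ℕ} {U : Set (Fin n → ℝ)} {x : Fin n → ℝ}
variable {g : Fin n → Fin n → (Fin n → ℝ) → ℝ}

lemma curv_antisym_cd (Γ : Fin n → Fin n → Fin n → (Fin n → ℝ) → ℝ) (a b c d : Fin n) :
    curv Γ a b c d x + curv Γ a b d c x = 0 := by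
  unfold curv
  have h : ∑ e, (Γ a e d x * Γ e b c x - Γ a e c x * Γ e b d x)
      = -∑ e, (Γ a e c x * Γ e b d x - Γ a e d x * Γ e b c x) := by
    rw [← Finset.sum_neg_distrib]
    exact Finset.sum_congr rfl fun e _ => by ring
  rw [h]
  ring

lemma Rlow_antisym_ab (hUo : IsOpen U) (hg : ∀ a b, ContDiffOn ℝ (⊤ : ℕ∞) (g a b) U)
    (hsym : ∀ a b, ∀ y ∈ U, g a b y = g b a y)
    (hdet : ∀ y ∈ U, (Matrix.of fun a b => g a b y).det ≠ 0)
    (hx : x ∈ U) (a b c d : Fin n) :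
    (∑ e, g a e x * curv (levicivita g) e b c d x)
      + (∑ e, g b e x * curv (levicivita g) e a c d x) = 0 := by
  rw [Rlow_formula hUo hg hsym hdet hx a b c d,
    Rlow_formula hUo hg hsym hdet hx b a c d]
  have hdG : ∀ i j k, DifferentiableAt ℝ (Glow g i j k) x := fun i j k =>
    diffAt hUo (contDiffOn_Glow hUo hg i j k) hx
  have hpd : ∀ u v : Fin n,
      pd u (Glow g a b v) x + pd u (Glow g b a v) x = pd u (pd v (g a b)) x := by
    intro u v
    rw [← pd_add (hdG a b v) (hdG b a v) u]
    exact pd_congr_on hUo (fun y hy => (pd_g_eq hUo hsym hy a b v).symm) hx u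
  have hq1 := quad_symm (fun i j => hsym i j x hx) a b c d
  have hq2 := quad_symm (fun i j => hsym i j x hx) a b d c
  have hcl := pd_comm hUo (hg a b) hx c d
  have e1 := hpd c d
  have e2 := hpd d c
  -- now pure linear algebra
  linarith [e1, e2, hq1, hq2, hcl]
end CurvSymm
section Bianchi
variable {n : ℕ} {U : Set (Fin n → ℝ)} {x : Fin n → ℝ}
variable {g : Fin n → Fin n → (Fin n → ℝ) → ℝ}

lemma lc_bianchi (hUo : IsOpen U) (hsym : ∀ a b, ∀ y ∈ U, g a b y = g b a y)
    (hx : x ∈ U) (a b c d : Fin n) :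
    curv (levicivita g) a b c d x + curv (levicivita g) a c d b x
      + curv (levicivita g) a d b c x = 0 := by
  unfold curv
  have hcg : ∀ u v w e : Fin n,
      pd u (levicivita g e v w) x = pd u (levicivita g e w v) x := fun u v w e =>
    pd_congr_on hUo (fun y hy => lc_symm_pt hUo hsym hy e v w) hx u
  have hs : ∀ e v w : Fin n, levicivita g e v w x = levicivita g e w v x := fun e v w =>
    lc_symm_pt hUo hsym hx e v w
  have hq : (∑ e, (levicivita g a e c x * levicivita g e b d x
        - levicivita g a e d x * levicivita g e b c x))
      + (∑ e, (levicivita g a e d x * levicivita g e c b x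
        - levicivita g a e b x * levicivita g e c d x))
      + (∑ e, (levicivita g a e b x * levicivita g e d c x
        - levicivita g a e c x * levicivita g e d b x)) = 0 := by
    rw [← Finset.sum_add_distrib, ← Finset.sum_add_distrib]
    refine Finset.sum_eq_zero fun e _ => ?_
    rw [hs e b d, hs e c b, hs e c d, hs e d c]
    ring
  rw [hcg d c b a, hcg b c d a, hcg b d c a, hcg c d b a]
  linarith [hq]

lemma Rlow_bianchi (hUo : IsOpen U) (hsym : ∀ a b, ∀ y ∈ U, g a b y = g b a y)
    (hx : x ∈ U) (a b c d : Fin n) :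
    (∑ e, g a e x * curv (levicivita g) e b c d x)
      + (∑ e, g a e x * curv (levicivita g) e c d b x)
      + (∑ e, g a e x * curv (levicivita g) e d b c x) = 0 := by
  rw [← Finset.sum_add_distrib, ← Finset.sum_add_distrib]
  refine Finset.sum_eq_zero fun e _ => ?_
  have h := lc_bianchi hUo hsym hx e b c d
  linear_combination g a e x * h

lemma Rlow_antisym_cd (a b c d : Fin n)
    (Γ : Fin n → Fin n → Fin n → (Fin n → ℝ) → ℝ) :
    (∑ e, g a e x * curv Γ e b c d x) + (∑ e, g a e x * curv Γ e b d c x) = 0 := by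
  rw [← Finset.sum_add_distrib]
  refine Finset.sum_eq_zero fun e _ => ?_
  have h := curv_antisym_cd (x := x) Γ e b c d
  linear_combination g a e x * h

lemma Rlow_pair_symm (hUo : IsOpen U) (hg : ∀ a b, ContDiffOn ℝ (⊤ : ℕ∞) (g a b) U)
    (hsym : ∀ a b, ∀ y ∈ U, g a b y = g b a y)
    (hdet : ∀ y ∈ U, (Matrix.of fun a b => g a b y).det ≠ 0)
    (hx : x ∈ U) (a b c d : Fin n) :
    ∑ e, g a e x * curv (levicivita g) e b c d x
      = ∑ e, g c e x * curv (levicivita g) e d a b x := by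
  let R : Fin n → Fin n → Fin n → Fin n → ℝ :=
    fun a b c d => ∑ e, g a e x * curv (levicivita g) e b c d x
  show R a b c d = R c d a b
  have hab : ∀ a b c d, R a b c d + R b a c d = 0 := fun a b c d =>
    Rlow_antisym_ab hUo hg hsym hdet hx a b c d
  have hcd : ∀ a b c d, R a b c d + R a b d c = 0 := fun a b c d =>
    Rlow_antisym_cd a b c d (levicivita g)
  have hbi : ∀ a b c d, R a b c d + R a c d b + R a d b c = 0 := fun a b c d =>
    Rlow_bianchi hUo hsym hx a b c d
  have h1 := hbi a b c d
  have h2 := hbi b c d a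
  have h3 := hbi c d a b
  have h4 := hbi d a b c
  linarith [h1, h2, h3, h4, hab a b c d, hcd b c a d, hab b d a c, hab c a b d,
    hcd a c b d, hab c b d a, hcd d b c a, hab d a b c, hab d c a b]
end Bianchi
section RicciSymm
variable {n : ℕ} {U : Set (Fin n → ℝ)} {x : Fin n → ℝ}
variable {g : Fin n → Fin n → (Fin n → ℝ) → ℝ}

lemma curv_up_eq (hdet : (Matrix.of fun a b => g a b x).det ≠ 0)
    (Γ : Fin n → Fin n → Fin n → (Fin n → ℝ) → ℝ) (a b c d : Fin n) :
    curv Γ a b c d x = ∑ e, minv g a e x * (∑ f, g e f x * curv Γ f b c d x) := by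
  calc curv Γ a b c d x = ∑ f, kd a f * curv Γ f b c d x := by simp
    _ = ∑ f, (∑ e, minv g a e x * g e f x) * curv Γ f b c d x := by
        refine Finset.sum_congr rfl fun f _ => ?_
        rw [minv_mul hdet]
    _ = ∑ f, ∑ e, minv g a e x * (g e f x * curv Γ f b c d x) := by
        refine Finset.sum_congr rfl fun f _ => ?_
        rw [Finset.sum_mul]
        exact Finset.sum_congr rfl fun e _ => by ring
    _ = ∑ e, minv g a e x * (∑ f, g e f x * curv Γ f b c d x) := by
        rw [Finset.sum_comm]
        exact Finset.sum_congr rfl fun e _ => by rw [Finset.mul_sum]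

lemma ricci_lc_symm (hUo : IsOpen U) (hg : ∀ a b, ContDiffOn ℝ (⊤ : ℕ∞) (g a b) U)
    (hsym : ∀ a b, ∀ y ∈ U, g a b y = g b a y)
    (hdet : ∀ y ∈ U, (Matrix.of fun a b => g a b y).det ≠ 0)
    (hx : x ∈ U) (b d : Fin n) :
    ricci (levicivita g) b d x = ricci (levicivita g) d b x := by
  have hm : ∀ i j, minv g i j x = minv g j i x := fun i j =>
    minv_symm (fun p q => hsym p q x hx) i j
  unfold ricci
  calc ∑ a, curv (levicivita g) a b a d x
      = ∑ a, ∑ e, minv g a e x * (∑ f, g e f x * curv (levicivita g) f b a d x) :=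
        Finset.sum_congr rfl fun a _ => curv_up_eq (hdet x hx) _ a b a d
    _ = ∑ a, ∑ e, minv g e a x * (∑ f, g a f x * curv (levicivita g) f b e d x) :=
        Finset.sum_comm
    _ = ∑ a, ∑ e, minv g a e x * (∑ f, g e f x * curv (levicivita g) f d a b x) := by
        refine Finset.sum_congr rfl fun a _ => Finset.sum_congr rfl fun e _ => ?_
        rw [hm e a, Rlow_pair_symm hUo hg hsym hdet hx a b e d]
    _ = ∑ a, curv (levicivita g) a d a b x :=
        Finset.sum_congr rfl fun a _ => (curv_up_eq (hdet x hx) _ a d a b).symm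

lemma schouten_lc_symm (hUo : IsOpen U) (hg : ∀ a b, ContDiffOn ℝ (⊤ : ℕ∞) (g a b) U)
    (hsym : ∀ a b, ∀ y ∈ U, g a b y = g b a y)
    (hdet : ∀ y ∈ U, (Matrix.of fun a b => g a b y).det ≠ 0)
    (hx : x ∈ U) (a b : Fin n) :
    schouten (levicivita g) a b x = schouten (levicivita g) b a x := by
  unfold schouten
  rw [ricci_lc_symm hUo hg hsym hdet hx a b]

lemma weyl_trace_symm (hUo : IsOpen U) (hg : ∀ a b, ContDiffOn ℝ (⊤ : ℕ∞) (g a b) U)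
    (hsym : ∀ a b, ∀ y ∈ U, g a b y = g b a y)
    (hdet : ∀ y ∈ U, (Matrix.of fun a b => g a b y).det ≠ 0)
    (hx : x ∈ U) (a d : Fin n) :
    ∑ e, ∑ b, ∑ c, g a e x * minv g b c x * weyl (levicivita g) e b c d x
      = ∑ e, ∑ b, ∑ c, g d e x * minv g b c x * weyl (levicivita g) e b c a x := by
  have hm : ∀ i j, minv g i j x = minv g j i x := fun i j =>
    minv_symm (fun p q => hsym p q x hx) i j
  have hP : ∀ i j, schouten (levicivita g) i j x = schouten (levicivita g) j i x :=
    fun i j => schouten_lc_symm hUo hg hsym hdet hx i j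
  have hmg : ∀ i j, (∑ c, minv g i c x * g j c x) = kd i j := by
    intro i j
    calc ∑ c, minv g i c x * g j c x = ∑ c, minv g i c x * g c j x :=
          Finset.sum_congr rfl fun c _ => by rw [hsym j c x hx]
      _ = kd i j := minv_mul (hdet x hx) i j
  have key : ∀ a d : Fin n,
      ∑ e, ∑ b, ∑ c, g a e x * minv g b c x * weyl (levicivita g) e b c d x
        = (∑ b, ∑ c, minv g b c x * (∑ e, g a e x * curv (levicivita g) e b c d x))
          - schouten (levicivita g) d a x
          + g a d x * (∑ b, ∑ c, minv g b c x * schouten (levicivita g) c b x) := by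
    intro a d
    have inner : ∀ b c : Fin n,
        ∑ e, g a e x * minv g b c x * weyl (levicivita g) e b c d x
          = minv g b c x * (∑ e, g a e x * curv (levicivita g) e b c d x)
            - minv g b c x * g a c x * schouten (levicivita g) d b x
            + minv g b c x * g a d x * schouten (levicivita g) c b x := by
      intro b c
      have expand : ∀ e, g a e x * minv g b c x * weyl (levicivita g) e b c d x
          = minv g b c x * (g a e x * curv (levicivita g) e b c d x)
            - (minv g b c x * schouten (levicivita g) d b x) * (g a e x * kd e c)
            + (minv g b c x * schouten (levicivita g) c b x) * (g a e x * kd e d) := by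
        intro e
        unfold weyl
        rw [hP c d]
        ring
      rw [Finset.sum_congr rfl fun e (_ : e ∈ Finset.univ) => expand e]
      simp only [Finset.sum_add_distrib, Finset.sum_sub_distrib, ← Finset.mul_sum,
        sum_mul_kd']
      ring
    calc ∑ e, ∑ b, ∑ c, g a e x * minv g b c x * weyl (levicivita g) e b c d x
        = ∑ b, ∑ c, ∑ e, g a e x * minv g b c x * weyl (levicivita g) e b c d x := by
          rw [Finset.sum_comm]
          exact Finset.sum_congr rfl fun b _ => Finset.sum_comm
      _ = ∑ b, ∑ c, (minv g b c x * (∑ e, g a e x * curv (levicivita g) e b c d x)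
            - minv g b c x * g a c x * schouten (levicivita g) d b x
            + minv g b c x * g a d x * schouten (levicivita g) c b x) :=
          Finset.sum_congr rfl fun b _ => Finset.sum_congr rfl fun c _ => inner b c
      _ = (∑ b, ∑ c, minv g b c x * (∑ e, g a e x * curv (levicivita g) e b c d x))
          - (∑ b, ∑ c, minv g b c x * g a c x * schouten (levicivita g) d b x)
          + (∑ b, ∑ c, minv g b c x * g a d x * schouten (levicivita g) c b x) := by
          simp only [Finset.sum_add_distrib, Finset.sum_sub_distrib]
      _ = (∑ b, ∑ c, minv g b c x * (∑ e, g a e x * curv (levicivita g) e b c d x))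
          - schouten (levicivita g) d a x
          + g a d x * (∑ b, ∑ c, minv g b c x * schouten (levicivita g) c b x) := by
          congr 1
          · congr 1
            calc ∑ b, ∑ c, minv g b c x * g a c x * schouten (levicivita g) d b x
                = ∑ b, schouten (levicivita g) d b x * (∑ c, minv g b c x * g a c x) := by
                  refine Finset.sum_congr rfl fun b _ => ?_
                  rw [Finset.mul_sum]
                  exact Finset.sum_congr rfl fun c _ => by ring
              _ = ∑ b, schouten (levicivita g) d b x * kd b a :=
                  Finset.sum_congr rfl fun b _ => by rw [hmg b a]
              _ = schouten (levicivita g) d a x := by simp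
          · rw [Finset.mul_sum]
            refine Finset.sum_congr rfl fun b _ => ?_
            rw [Finset.mul_sum]
            exact Finset.sum_congr rfl fun c _ => by ring
  have hQ : (∑ b, ∑ c, minv g b c x * (∑ e, g a e x * curv (levicivita g) e b c d x))
      = ∑ b, ∑ c, minv g b c x * (∑ e, g d e x * curv (levicivita g) e b c a x) := by
    calc ∑ b, ∑ c, minv g b c x * (∑ e, g a e x * curv (levicivita g) e b c d x)
        = ∑ b, ∑ c, minv g c b x * (∑ e, g a e x * curv (levicivita g) e c b d x) :=
          Finset.sum_comm
      _ = ∑ b, ∑ c, minv g b c x * (∑ e, g d e x * curv (levicivita g) e b c a x) := by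
          refine Finset.sum_congr rfl fun b _ => Finset.sum_congr rfl fun c _ => ?_
          rw [hm c b]
          congr 1
          have h1 : (∑ e, g d e x * curv (levicivita g) e b c a x)
              = ∑ e, g c e x * curv (levicivita g) e a d b x :=
            Rlow_pair_symm hUo hg hsym hdet hx d b c a
          have h2 : (∑ e, g c e x * curv (levicivita g) e a d b x)
              + (∑ e, g a e x * curv (levicivita g) e c d b x) = 0 :=
            Rlow_antisym_ab hUo hg hsym hdet hx c a d b
          have h3 : (∑ e, g a e x * curv (levicivita g) e c d b x)
              + (∑ e, g a e x * curv (levicivita g) e c b d x) = 0 :=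
            Rlow_antisym_cd a c d b (levicivita g)
          linarith [h1, h2, h3]
  rw [key a d, key d a, hQ, hP d a, hP a d, hsym a d x hx]
end RicciSymm
/-- The tensor `B_{cb} = ∇_c A_b − A_c A_b` used in the projective change of curvature. -/
def Bf {n : ℕ} (Γ : Fin n → Fin n → Fin n → (Fin n → ℝ) → ℝ)
    (A : Fin n → (Fin n → ℝ) → ℝ) (c b : Fin n) (x : Fin n → ℝ) : ℝ :=
  pd c (A b) x - (∑ e, A e x * Γ e b c x) - A c x * A b x

section ProjInv
variable {n : ℕ} {U : Set (Fin n → ℝ)} {x : Fin n → ℝ}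
variable {Γ Γ' : Fin n → Fin n → Fin n → (Fin n → ℝ) → ℝ}
variable {A : Fin n → (Fin n → ℝ) → ℝ}

lemma curv_pe (hUo : IsOpen U) (hΓc : ∀ a b c, ContDiffOn ℝ (⊤ : ℕ∞) (Γ a b c) U)
    (hΓs : ∀ a b c, ∀ y ∈ U, Γ a b c y = Γ a c b y)
    (hA : ∀ a, ContDiffOn ℝ (⊤ : ℕ∞) (A a) U)
    (hrel : ∀ a b c, ∀ y ∈ U, Γ' a b c y = Γ a b c y + kd a c * A b y + kd a b * A c y)
    (hx : x ∈ U) (a b c d : Fin n) :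
    curv Γ' a b c d x = curv Γ a b c d x - kd a c * Bf Γ A d b x + kd a d * Bf Γ A c b x
      + kd a b * (Bf Γ A c d x - Bf Γ A d c x) := by
  have hdΓ : ∀ i j k, DifferentiableAt ℝ (Γ i j k) x := fun i j k =>
    diffAt hUo (hΓc i j k) hx
  have hdA : ∀ i, DifferentiableAt ℝ (A i) x := fun i => diffAt hUo (hA i) hx
  have hpd : ∀ u v w : Fin n, pd u (Γ' a v w) x
      = pd u (Γ a v w) x + kd a w * pd u (A v) x + kd a v * pd u (A w) x := by
    intro u v w
    rw [pd_congr_on hUo (g := fun y => Γ a v w y + (kd a w * A v y + kd a v * A w y))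
      (fun y hy => by rw [hrel a v w y hy]; ring) hx u]
    rw [pd_add (g := fun y => kd a w * A v y + kd a v * A w y) (hdΓ a v w) (((hdA v).const_mul (kd a w)).add ((hdA w).const_mul (kd a v))) u]
    rw [pd_add ((hdA v).const_mul (kd a w)) ((hdA w).const_mul (kd a v)) u]
    rw [pd_const_mul (hdA v) (kd a w) u, pd_const_mul (hdA w) (kd a v) u]
    ring
  have hsum : ∑ e, (Γ' a e c x * Γ' e b d x - Γ' a e d x * Γ' e b c x)
      = (∑ e, Γ a e c x * Γ e b d x) - (∑ e, Γ a e d x * Γ e b c x)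
        + A b x * Γ a d c x - A b x * Γ a c d x
        + kd a c * ((∑ e, A e x * Γ e b d x) + A b x * A d x)
        - kd a d * ((∑ e, A e x * Γ e b c x) + A b x * A c x) := by
    have expand : ∀ e, Γ' a e c x * Γ' e b d x - Γ' a e d x * Γ' e b c x
        = Γ a e c x * Γ e b d x - Γ a e d x * Γ e b c x
          + A b x * (Γ a e c x * kd e d) + A d x * (Γ a e c x * kd e b)
          + kd a c * (A e x * Γ e b d x)
          + (kd a c * A b x) * (A e x * kd e d) + (kd a c * A d x) * (A e x * kd e b)
          + A c x * (kd a e * Γ e b d x)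
          + (A c x * A b x) * (kd a e * kd e d) + (A c x * A d x) * (kd a e * kd e b)
          - A b x * (Γ a e d x * kd e c) - A c x * (Γ a e d x * kd e b)
          - kd a d * (A e x * Γ e b c x)
          - (kd a d * A b x) * (A e x * kd e c) - (kd a d * A c x) * (A e x * kd e b)
          - A d x * (kd a e * Γ e b c x)
          - (A d x * A b x) * (kd a e * kd e c) - (A d x * A c x) * (kd a e * kd e b) := by
      intro e
      rw [hrel a e c x hx, hrel e b d x hx, hrel a e d x hx, hrel e b c x hx]
      ring
    rw [Finset.sum_congr rfl fun e (_ : e ∈ Finset.univ) => expand e]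
    simp only [Finset.sum_add_distrib, Finset.sum_sub_distrib, ← Finset.mul_sum,
      sum_kd_mul, sum_mul_kd', sum_kd_left, sum_kd_right]
    ring
  unfold curv Bf
  rw [hpd c b d, hpd d b c, hsum]
  have hsymΓ : (∑ e, A e x * Γ e d c x) = ∑ e, A e x * Γ e c d x :=
    Finset.sum_congr rfl fun e _ => by rw [hΓs e d c x hx]
  rw [hsymΓ, hΓs a d c x hx]
  simp only [Finset.sum_sub_distrib]
  ring

lemma ricci_pe (hUo : IsOpen U) (hΓc : ∀ a b c, ContDiffOn ℝ (⊤ : ℕ∞) (Γ a b c) U)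
    (hΓs : ∀ a b c, ∀ y ∈ U, Γ a b c y = Γ a c b y)
    (hA : ∀ a, ContDiffOn ℝ (⊤ : ℕ∞) (A a) U)
    (hrel : ∀ a b c, ∀ y ∈ U, Γ' a b c y = Γ a b c y + kd a c * A b y + kd a b * A c y)
    (hx : x ∈ U) (b d : Fin n) :
    ricci Γ' b d x = ricci Γ b d x + Bf Γ A b d x - (n : ℝ) * Bf Γ A d b x := by
  unfold ricci
  rw [Finset.sum_congr rfl fun a (_ : a ∈ Finset.univ) =>
    curv_pe hUo hΓc hΓs hA hrel hx a b a d]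
  simp only [kd_self, one_mul, Finset.sum_add_distrib, Finset.sum_sub_distrib,
    sum_kd_mul', Finset.sum_const, Finset.card_univ, Fintype.card_fin, nsmul_eq_mul]
  ring

lemma schouten_pe (hn : 3 ≤ n) (hUo : IsOpen U)
    (hΓc : ∀ a b c, ContDiffOn ℝ (⊤ : ℕ∞) (Γ a b c) U)
    (hΓs : ∀ a b c, ∀ y ∈ U, Γ a b c y = Γ a c b y)
    (hA : ∀ a, ContDiffOn ℝ (⊤ : ℕ∞) (A a) U)
    (hrel : ∀ a b c, ∀ y ∈ U, Γ' a b c y = Γ a b c y + kd a c * A b y + kd a b * A c y)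
    (hx : x ∈ U) (a b : Fin n) :
    schouten Γ' a b x = schouten Γ a b x - Bf Γ A a b x := by
  have h3 : (3 : ℝ) ≤ (n : ℝ) := by exact_mod_cast hn
  have h1 : (n : ℝ) - 1 ≠ 0 := by linarith
  have h2 : (n : ℝ) + 1 ≠ 0 := by linarith
  unfold schouten
  rw [ricci_pe hUo hΓc hΓs hA hrel hx a b, ricci_pe hUo hΓc hΓs hA hrel hx b a]
  field_simp
  ring

lemma weyl_pe (hn : 3 ≤ n) (hUo : IsOpen U)
    (hΓc : ∀ a b c, ContDiffOn ℝ (⊤ : ℕ∞) (Γ a b c) U)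
    (hΓs : ∀ a b c, ∀ y ∈ U, Γ a b c y = Γ a c b y)
    (hA : ∀ a, ContDiffOn ℝ (⊤ : ℕ∞) (A a) U)
    (hrel : ∀ a b c, ∀ y ∈ U, Γ' a b c y = Γ a b c y + kd a c * A b y + kd a b * A c y)
    (hx : x ∈ U) (a b c d : Fin n) :
    weyl Γ' a b c d x = weyl Γ a b c d x := by
  unfold weyl
  rw [curv_pe hUo hΓc hΓs hA hrel hx a b c d,
    schouten_pe hn hUo hΓc hΓs hA hrel hx d b,
    schouten_pe hn hUo hΓc hΓs hA hrel hx c b,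
    schouten_pe hn hUo hΓc hΓs hA hrel hx c d,
    schouten_pe hn hUo hΓc hΓs hA hrel hx d c]
  ring
end ProjInv
end
/-- Necessary condition for metrisability (Theorem 2.4): if the
projective class of `Γ` contains the Levi-Civita connection of a metric `ĝ`, then
there is a smooth symmetric nondegenerate `g^{ab}` whose inverse `g_{ab}` satisfies
`Σ g_{ae} g^{bc} W^e_{bcd} = Σ g_{de} g^{bc} W^e_{bca}`, and `ĝ_{ab} = e^{2φ} g_{ab}`
for such a solution and some smooth `φ`. -/
theorem metrisability_necessary_condition {n : ℕ} (hn : 3 ≤ n)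
    (U : Set (Fin n → ℝ)) (hUo : IsOpen U) (hUne : U.Nonempty)
    (Γ : Fin n → Fin n → Fin n → (Fin n → ℝ) → ℝ) (hΓ : IsConn U Γ)
    (ghat : Fin n → Fin n → (Fin n → ℝ) → ℝ) (hghat : IsMetric U ghat)
    (hpe : ProjEquiv U (levicivita ghat) Γ) :
    ∃ gup : Fin n → Fin n → (Fin n → ℝ) → ℝ,
      (∀ a b, ContDiffOn ℝ (⊤ : ℕ∞) (gup a b) U) ∧
      (∀ a b, ∀ x ∈ U, gup a b x = gup b a x) ∧
      (∀ x ∈ U, (Matrix.of fun a b => gup a b x).det ≠ 0) ∧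
      (∀ x ∈ U, ∀ a d : Fin n,
        (∑ e, ∑ b, ∑ c, minv gup a e x * gup b c x * weyl Γ e b c d x)
          = ∑ e, ∑ b, ∑ c, minv gup d e x * gup b c x * weyl Γ e b c a x) ∧
      (∃ φ : (Fin n → ℝ) → ℝ, ContDiffOn ℝ (⊤ : ℕ∞) φ U ∧
        ∀ x ∈ U, ∀ a b : Fin n, ghat a b x = Real.exp (2 * φ x) * minv gup a b x) := by
  obtain ⟨hg, hsym, hdet⟩ := hghat
  obtain ⟨A, hA, hrel⟩ := hpe
  refine ⟨minv ghat, fun a b => contDiffOn_minv hUo hg hdet a b,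
    fun a b x hx => minv_symm (fun p q => hsym p q x hx) a b,
    fun x hx => det_minv_ne (hdet x hx), ?_, ?_⟩
  · intro x hx a d
    calc ∑ e, ∑ b, ∑ c, minv (minv ghat) a e x * minv ghat b c x * weyl Γ e b c d x
        = ∑ e, ∑ b, ∑ c,
            ghat a e x * minv ghat b c x * weyl (levicivita ghat) e b c d x := by
          refine Finset.sum_congr rfl fun e _ => Finset.sum_congr rfl fun b _ =>
            Finset.sum_congr rfl fun c _ => ?_
          rw [minv_minv (hdet x hx) a e,
            weyl_pe hn hUo hΓ.1 hΓ.2 hA hrel hx e b c d]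
      _ = ∑ e, ∑ b, ∑ c,
            ghat d e x * minv ghat b c x * weyl (levicivita ghat) e b c a x :=
          weyl_trace_symm hUo hg hsym hdet hx a d
      _ = ∑ e, ∑ b, ∑ c, minv (minv ghat) d e x * minv ghat b c x * weyl Γ e b c a x := by
          refine Finset.sum_congr rfl fun e _ => Finset.sum_congr rfl fun b _ =>
            Finset.sum_congr rfl fun c _ => ?_
          rw [minv_minv (hdet x hx) d e,
            weyl_pe hn hUo hΓ.1 hΓ.2 hA hrel hx e b c a]
  · refine ⟨fun _ => 0, contDiffOn_const, fun x hx a b => ?_⟩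
    rw [minv_minv (hdet x hx) a b]
    simp
end

section
/- Let n ≥ 3 and let ĝ_{ab} be a smooth pseudo-Riemannian metric on U with Levi-Civita connection Γ. If ĝ is an Einstein metric, i.e. its Ricci tensor satisfies R_{ab} = Λ ĝ_{ab} on U for some smooth function Λ, then the projective Weyl tensor of Γ equals the metric (conformal) Weyl tensor of ĝ: Ŵ^a_{bcd} = LCW^a_{bcd} at every point of U. -/
open scoped BigOperators

/-- For `n ≥ 3`, Einstein metrics (`R_{ab} = Λ ĝ_{ab}`) have equal
projective and metric (conformal) Weyl tensors (Corollary 2.6). -/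
theorem einstein_projective_weyl_eq_metric_weyl {n : ℕ} (hn : 3 ≤ n)
    (U : Set (Fin n → ℝ)) (hUo : IsOpen U) (hUne : U.Nonempty)
    (g : Fin n → Fin n → (Fin n → ℝ) → ℝ) (hg : IsMetric U g)
    (Λ : (Fin n → ℝ) → ℝ) (hΛ : ContDiffOn ℝ (⊤ : ℕ∞) Λ U)
    (hEin : ∀ a b : Fin n, ∀ x ∈ U, ricci (levicivita g) a b x = Λ x * g a b x) :
    ∀ x ∈ U, ∀ a b c d : Fin n,
      weyl (levicivita g) a b c d x = lcWeyl g a b c d x := by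
  intro x hx a b c d
  have hsymg : ∀ i j : Fin n, g i j x = g j i x := fun i j => hg.2.1 i j x hx
  have hdet := hg.2.2 x hx
  have hn1 : (n : ℝ) - 1 ≠ 0 := by
    have : (3 : ℝ) ≤ (n : ℝ) := by exact_mod_cast hn
    linarith
  have hn2 : (n : ℝ) - 2 ≠ 0 := by
    have : (3 : ℝ) ≤ (n : ℝ) := by exact_mod_cast hn
    linarith
  have hinv : ∀ i j : Fin n, (∑ e, minv g i e x * g e j x) = kd i j := by
    intro i j
    have hM : IsUnit (Matrix.of fun a b => g a b x).det := hdet.isUnit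
    have h1 := Matrix.nonsing_inv_mul (Matrix.of fun a b => g a b x) hM
    have h2 := congrFun (congrFun h1 i) j
    rw [Matrix.mul_apply] at h2
    simpa [minv, kd, Matrix.one_apply] using h2
  have hricci : ∀ i j : Fin n, ricci (levicivita g) i j x = Λ x * g i j x :=
    fun i j => hEin i j x hx
  have hsch : ∀ i j : Fin n,
      schouten (levicivita g) i j x = Λ x / ((n : ℝ) - 1) * g i j x := by
    intro i j
    unfold schouten
    rw [hricci, hricci, hsymg j i]
    field_simp
    ring
  have hRS : ricciScalar g x = (n : ℝ) * Λ x := by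
    unfold ricciScalar
    have : ∀ i : Fin n, (∑ j, minv g i j x * ricci (levicivita g) i j x) = Λ x := by
      intro i
      have : (∑ j, minv g i j x * ricci (levicivita g) i j x)
          = Λ x * ∑ j, minv g i j x * g j i x := by
        rw [Finset.mul_sum]
        refine Finset.sum_congr rfl fun j _ => ?_
        rw [hricci, hsymg i j]; ring
      rw [this, hinv]
      simp [kd]
    simp only [this]
    simp [Finset.sum_const, mul_comm]
  have hlcs : ∀ i j : Fin n,
      lcSchouten g i j x = Λ x / (2 * ((n : ℝ) - 1)) * g i j x := by
    intro i j
    unfold lcSchouten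
    rw [hricci, hRS]
    field_simp
    ring
  have hsum : ∀ p q r : Fin n,
      (∑ e, g p q x * minv g a e x * lcSchouten g e r x)
        = g p q x * (Λ x / (2 * ((n : ℝ) - 1))) * kd a r := by
    intro p q r
    have : (∑ e, g p q x * minv g a e x * lcSchouten g e r x)
        = g p q x * (Λ x / (2 * ((n : ℝ) - 1))) * ∑ e, minv g a e x * g e r x := by
      rw [Finset.mul_sum]
      refine Finset.sum_congr rfl fun e _ => ?_
      rw [hlcs]; ring
    rw [this, hinv]
  unfold weyl lcWeyl
  rw [hsum b d c, hsum b c d, hsch c d, hsch d c, hsch d b, hsch c b,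
    hlcs d b, hlcs c b, hsymg d b, hsymg c b, hsymg d c]
  field_simp
  ring
end
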